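/- For fixed Jacobi energy c < −3/2, the cubic equation 2E(c−E)² + 1 = 0 in E has exactly three real solutions E₁ < E₂ < −1/2 < E₃ < 0. -/

import Mathlib

/-!
Write `p(E) = 2E(c - E)² + 1`. Then `p(c - 1) = 2c - 1 < 0`, `p(c) = p(0) = 1` and
`p(-1/2) = 1 - (c + 1/2)² < 0` because `c + 1/2 < -1`, so the intermediate value theorem gives a
root in each of `(c - 1, c)`, `(c, -1/2)` and `(-1/2, 0)`. A cubic has no further roots.
-/

open Polynomial Set

theorem Polynomial.eq_or_eq_or_eq_of_isRoot {R : Type*} [CommRing R] [IsDomain R] {p : R[X]}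
    (hp0 : p ≠ 0) (hp : p.natDegree ≤ 3) {x₁ x₂ x₃ x : R} (h₁₂ : x₁ ≠ x₂) (h₁₃ : x₁ ≠ x₃)
    (h₂₃ : x₂ ≠ x₃) (hx₁ : p.IsRoot x₁) (hx₂ : p.IsRoot x₂) (hx₃ : p.IsRoot x₃)
    (hx : p.IsRoot x) : x = x₁ ∨ x = x₂ ∨ x = x₃ := by
  classical
  by_contra! hne
  obtain ⟨hne₁, hne₂, hne₃⟩ := hne
  have hsub : ({x, x₁, x₂, x₃} : Finset R).val ⊆ p.roots := by
    intro y hy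
    simp only [Finset.insert_val, Multiset.mem_ndinsert, Finset.mem_val,
      Finset.mem_singleton] at hy
    rcases hy with rfl | rfl | rfl | rfl <;> exact (mem_roots hp0).2 ‹_›
  have hcard := card_le_degree_of_subset_roots hsub
  rw [Finset.card_insert_of_notMem (by simp [hne₁, hne₂, hne₃]),
    Finset.card_insert_of_notMem (by simp [h₁₂, h₁₃]), Finset.card_pair h₂₃] at hcard
  omega

theorem Polynomial.exists_isRoot_mem_Ioo {p : ℝ[X]} {a b : ℝ} (hab : a ≤ b)
    (hsign : p.eval a * p.eval b < 0) : ∃ x ∈ Ioo a b, p.IsRoot x := by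
  have hcont : ContinuousOn (fun x => p.eval x) (Icc a b) := p.continuousOn
  rcases lt_or_gt_of_ne (mul_ne_zero_iff.1 hsign.ne).1 with ha | ha
  · exact intermediate_value_Ioo hab hcont ⟨ha, by nlinarith⟩
  · exact intermediate_value_Ioo' hab hcont ⟨by nlinarith, ha⟩

noncomputable def jacobiCubic (c : ℝ) : ℝ[X] := C 2 * X * (C c - X) ^ 2 + 1

theorem eval_jacobiCubic (c E : ℝ) : (jacobiCubic c).eval E = 2 * E * (c - E) ^ 2 + 1 := by
  simp [jacobiCubic]

theorem isRoot_jacobiCubic {c E : ℝ} :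
    (jacobiCubic c).IsRoot E ↔ 2 * E * (c - E) ^ 2 + 1 = 0 := by
  rw [IsRoot.def, eval_jacobiCubic]

theorem natDegree_jacobiCubic_le (c : ℝ) : (jacobiCubic c).natDegree ≤ 3 := by
  unfold jacobiCubic
  compute_degree

theorem jacobiCubic_ne_zero (c : ℝ) : jacobiCubic c ≠ 0 := fun h => by
  simpa [eval_jacobiCubic] using congrArg (eval 0) h

/-- For fixed Jacobi energy c < −3/2, the cubic 2E(c−E)² + 1 = 0 has exactly
three real solutions E₁ < E₂ < −1/2 < E₃ < 0. -/
theorem stmt_12 (c : ℝ) (hc : c < -3 / 2) :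
    ∃ E₁ E₂ E₃ : ℝ, E₁ < E₂ ∧ E₂ < -(1 / 2) ∧ -(1 / 2) < E₃ ∧ E₃ < 0 ∧
      2 * E₁ * (c - E₁) ^ 2 + 1 = 0 ∧ 2 * E₂ * (c - E₂) ^ 2 + 1 = 0 ∧
      2 * E₃ * (c - E₃) ^ 2 + 1 = 0 ∧
      ∀ E : ℝ, 2 * E * (c - E) ^ 2 + 1 = 0 → E = E₁ ∨ E = E₂ ∨ E = E₃ := by
  obtain ⟨E₁, ⟨-, hE₁⟩, hp₁⟩ := (jacobiCubic c).exists_isRoot_mem_Ioo (a := c - 1) (b := c)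
    (by linarith) (by simp only [eval_jacobiCubic]; nlinarith)
  obtain ⟨E₂, ⟨hE₂l, hE₂r⟩, hp₂⟩ := (jacobiCubic c).exists_isRoot_mem_Ioo (a := c)
    (b := -(1 / 2)) (by linarith) (by simp only [eval_jacobiCubic]; nlinarith)
  obtain ⟨E₃, ⟨hE₃l, hE₃r⟩, hp₃⟩ := (jacobiCubic c).exists_isRoot_mem_Ioo (a := -(1 / 2))
    (b := 0) (by linarith) (by simp only [eval_jacobiCubic]; nlinarith)
  have h₁₂ : E₁ < E₂ := hE₁.trans hE₂l
  have h₂₃ : E₂ < E₃ := hE₂r.trans hE₃l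
  refine ⟨E₁, E₂, E₃, h₁₂, hE₂r, hE₃l, hE₃r, isRoot_jacobiCubic.1 hp₁, isRoot_jacobiCubic.1 hp₂,
    isRoot_jacobiCubic.1 hp₃, fun E hE => ?_⟩
  exact eq_or_eq_or_eq_of_isRoot (jacobiCubic_ne_zero c) (natDegree_jacobiCubic_le c) h₁₂.ne
    (h₁₂.trans h₂₃).ne h₂₃.ne hp₁ hp₂ hp₃ (isRoot_jacobiCubic.2 hE)
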